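/- Truncation lemma: Let K be an algebraically closed field of characteristic 0 with a valuation v_K : K → 𝕋, and let I be a differential ideal of K[[t]]{x₁,…,xₙ}. For every m ∈ ℕ and every tropical solution S = (S₁,…,Sₙ) ∈ Sol_𝐒(trop_v(I)) with S_i = ∑_j c_{i,j}tʲ, the truncated point B_m := ((c_{i,j} + v_K(j!·1_K))_{0 ≤ j ≤ N_m})_{1 ≤ i ≤ n} ∈ (𝕋^{N_m+1})ⁿ lies in the tropical variety V^trop({trop_{v_K}(F_{l,r}) : 1 ≤ l ≤ s, 0 ≤ r ≤ m}). -/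

import Mathlib

open scoped Classical ENNReal
open Filter
set_option synthInstance.maxHeartbeats 1000000
set_option maxHeartbeats 1000000

noncomputable section
namespace TropDiff

/-- The tropical semiring 𝕋 = ℝ ∪ {∞} with addition min and multiplication +,
modelled as `WithTop ℝ` (so that the tropical sum is `min` and the tropical
product is `+`). -/
abbrev TT : Type := WithTop ℝ

/-- Tropical power series 𝕋[[t]], modelled by their coefficient functions. -/
abbrev TSeries : Type := ℕ → TT

/-- 𝕋₂ = ℝ² ∪ {∞}, with addition the lexicographic minimum (i.e. the lattice
`min` of `WithTop (ℝ ×ₗ ℝ)`) and multiplication the componentwise sum `+`. -/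
abbrev T2 : Type := WithTop (ℝ ×ₗ ℝ)

/-- `vK : K → 𝕋` is a valuation: v(a) = ∞ iff a = 0, v(ab) = v(a)+v(b) and
v(a+b) ≥ min (v(a), v(b)). -/
structure IsVal (K : Type) [Field K] (vK : K → TT) : Prop where
  eq_top_iff : ∀ a : K, vK a = ⊤ ↔ a = 0
  map_mul : ∀ a b : K, vK (a * b) = vK a + vK b
  min_le_add : ∀ a b : K, min (vK a) (vK b) ≤ vK (a + b)

variable {K : Type} [Field K]

/-- Ritt's differential polynomial ring K[[t]]{x₁,…,xₙ}: the polynomial ring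
over K[[t]] in the variables x_i^{(j)}, i ∈ Fin n, j ∈ ℕ. -/
abbrev DP (K : Type) [Field K] (n : ℕ) : Type := MvPolynomial (Fin n × ℕ) (PowerSeries K)

/-- d/dt on K[[t]]. -/
def psDeriv (g : PowerSeries K) : PowerSeries K :=
  PowerSeries.mk fun j => ((j + 1 : ℕ) : K) * PowerSeries.coeff (j + 1) g

/-- The Ritt differential on K[[t]]{x₁,…,xₙ}: the unique derivation extending
d/dt on the coefficients and sending x_i^{(j)} to x_i^{(j+1)} (written out on
each monomial by the Leibniz rule). -/
def dDP {n : ℕ} (p : DP K n) : DP K n :=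
  p.support.sum (fun m => MvPolynomial.monomial m (psDeriv (MvPolynomial.coeff m p))) +
  p.support.sum (fun m => MvPolynomial.C (MvPolynomial.coeff m p) *
    m.support.sum (fun ij => m ij •
      (MvPolynomial.X (ij.1, ij.2 + 1) * MvPolynomial.monomial (m - Finsupp.single ij 1) 1)))

/-- Evaluation of a differential polynomial at an n-tuple of power series:
substitute (d/dt)ʲ(a i) for x_i^{(j)}.  `a` is a solution of `f` iff this is 0. -/
def evalSol {n : ℕ} (f : DP K n) (a : Fin n → PowerSeries K) : PowerSeries K :=
  MvPolynomial.eval (fun ij => psDeriv^[ij.2] (a ij.1)) f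

/-- Coefficientwise tropicalization ṽ : K[[t]] → 𝕋[[t]]. -/
def tropS (vK : K → TT) (g : PowerSeries K) : TSeries := fun j => vK (PowerSeries.coeff j g)

/-- The tropical differential d_v on 𝕋[[t]]:
d_v(∑ cₙtⁿ) = ∑ (v_K((n+1)·1_K) + c_{n+1}) tⁿ. -/
def dv (vK : K → TT) (S : TSeries) : TSeries := fun j => vK ((j + 1 : ℕ) : K) + S (j + 1)

/-- Φ : 𝕋[[t]] → 𝕋₂, S ↦ (n₀, c_{n₀}) where n₀ is the least index with
c_{n₀} ≠ ∞; the all-∞ series goes to ∞. -/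
def Phi (S : TSeries) : T2 :=
  if h : ∃ j, S j ≠ ⊤ then
    ((toLex ((Nat.find h : ℝ), WithTop.untopD 0 (S (Nat.find h))) : ℝ ×ₗ ℝ) : T2)
  else ⊤

/-- The rank-2 valuation v : K[[t]] → 𝕋₂, v(∑ aₙ tⁿ) = (n₀, v_K(a_{n₀})) where
n₀ is the least index with a_{n₀} ≠ 0, and v(0) = ∞. -/
def valT2 (vK : K → TT) (g : PowerSeries K) : T2 :=
  if h : ∃ j, PowerSeries.coeff j g ≠ 0 then
    ((toLex ((Nat.find h : ℝ),
        WithTop.untopD 0 (vK (PowerSeries.coeff (Nat.find h) g))) : ℝ ×ₗ ℝ) : T2)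
  else ⊤

/-- The tropical weight ∑_{i,j} λ_{i,j}·Φ(d_vʲ(S_i)) of the differential
monomial with exponents λ = m. -/
def mweight {n : ℕ} (vK : K → TT) (S : Fin n → TSeries) (m : (Fin n × ℕ) →₀ ℕ) : T2 :=
  m.support.sum fun ij => m ij • Phi ((dv vK)^[ij.2] (S ij.1))

/-- trop_v(f)(S): the lexicographic minimum, over the monomials λ of f, of
v(A_λ) + ∑_{i,j} λ_{i,j}·Φ(d_vʲ(S_i)). -/
def tropEval {n : ℕ} (vK : K → TT) (f : DP K n) (S : Fin n → TSeries) : T2 :=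
  f.support.inf fun m => valT2 vK (MvPolynomial.coeff m f) + mweight vK S m

/-- S is a tropical solution of trop_v(f): the minimum is ∞ or is attained by
at least two distinct monomials of f. -/
def IsTropSol {n : ℕ} (vK : K → TT) (f : DP K n) (S : Fin n → TSeries) : Prop :=
  tropEval vK f S = ⊤ ∨
  ∃ m₁ ∈ f.support, ∃ m₂ ∈ f.support, m₁ ≠ m₂ ∧
    valT2 vK (MvPolynomial.coeff m₁ f) + mweight vK S m₁ = tropEval vK f S ∧
    valT2 vK (MvPolynomial.coeff m₂ f) + mweight vK S m₂ = tropEval vK f S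

/-- F_{l,r} = (dʳ f_l)|_{t=0} ∈ K[x_i^{(j)}]. -/
def Flr {n s : ℕ} (fs : Fin s → DP K n) (l : Fin s) (r : ℕ) :
    MvPolynomial (Fin n × ℕ) K :=
  MvPolynomial.map ((PowerSeries.constantCoeff (R := K))) (dDP^[r] (fs l))

/-- A_∞ ⊆ (K^ℕ)ⁿ: the common zero locus of all the F_{l,r}. -/
def Ainf {n s : ℕ} (fs : Fin s → DP K n) : Set (Fin n → ℕ → K) :=
  {x | ∀ (l : Fin s) (r : ℕ), MvPolynomial.eval (fun ij => x ij.1 ij.2) (Flr fs l r) = 0}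

/-- N_m: the least N such that every F_{l,r} with r ≤ m involves only the
variables x_i^{(j)} with j ≤ N (i.e. the largest j occurring). -/
def Nm {n s : ℕ} (fs : Fin s → DP K n) (m : ℕ) : ℕ :=
  Finset.sup (Finset.univ ×ˢ Finset.range (m + 1)) fun lr =>
    (Flr fs lr.1 lr.2).support.sup fun mon => mon.support.sup fun ij => ij.2

/-- A_m ⊆ (K^{N_m+1})ⁿ: the common zero locus of the F_{l,r} with r ≤ m, the
coordinate (i,j) being substituted for x_i^{(j)}. -/
def Am {n s : ℕ} (fs : Fin s → DP K n) (m : ℕ) : Set (Fin n → Fin (Nm fs m + 1) → K) :=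
  {x | ∀ (l : Fin s), ∀ r ≤ m, MvPolynomial.eval
    (fun ij => if h : ij.2 < Nm fs m + 1 then x ij.1 ⟨ij.2, h⟩ else 0) (Flr fs l r) = 0}

/-- The projection π_{(m,m′)} forgetting the coordinates (i,j) with j > N'. -/
def projN {n N N' : ℕ} (h : N' ≤ N) (x : Fin n → Fin (N + 1) → K) :
    Fin n → Fin (N' + 1) → K :=
  fun i j => x i (Fin.castLE (Nat.succ_le_succ h) j)

/-- The fiber (𝕍_m)_S^{v_K} of the tropicalization with respect to v_K:
v_K(x_{i,j}) = c_{i,j} + v_K(j!). -/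
def VmVal {n : ℕ} (vK : K → TT) (S : Fin n → TSeries) (N : ℕ) :
    Set (Fin n → Fin (N + 1) → K) :=
  {x | ∀ (i : Fin n) (j : Fin (N + 1)),
    vK (x i j) = S i (j : ℕ) + vK ((Nat.factorial (j : ℕ) : ℕ) : K)}

/-- The fiber (𝕍_m)_S^{v_triv} of the tropicalization with respect to the
trivial valuation: x_{i,j} = 0 iff c_{i,j} = ∞. -/
def VmTriv {n : ℕ} (S : Fin n → TSeries) (N : ℕ) : Set (Fin n → Fin (N + 1) → K) :=
  {x | ∀ (i : Fin n) (j : Fin (N + 1)), x i j = 0 ↔ S i (j : ℕ) = ⊤}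

/-- The fiber (𝕍_∞)_S^{v_K}. -/
def VinfVal {n : ℕ} (vK : K → TT) (S : Fin n → TSeries) : Set (Fin n → ℕ → K) :=
  {x | ∀ (i : Fin n) (j : ℕ), vK (x i j) = S i j + vK ((Nat.factorial j : ℕ) : K)}

/-- Zariski closed subsets of affine space (K^N)ⁿ: zero loci of collections of
polynomials. -/
def ZClosed {n N : ℕ} (C : Set (Fin n → Fin N → K)) : Prop :=
  ∃ T : Set (MvPolynomial (Fin n × Fin N) K),
    C = {x | ∀ p ∈ T, MvPolynomial.eval (fun ij => x ij.1 ij.2) p = 0}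

/-- Zariski constructible subsets: finite unions of differences of Zariski
closed sets. -/
def ZConstructible {n N : ℕ} (C : Set (Fin n → Fin N → K)) : Prop :=
  ∃ (k : ℕ) (Z W : Fin k → Set (Fin n → Fin N → K)),
    (∀ i, ZClosed (Z i)) ∧ (∀ i, ZClosed (W i)) ∧ C = ⋃ i, Z i \ W i

/-- trop_{v_K}(F)(B) = min over the monomials μ of F of
v_K(a_μ) + ∑_{i,j} μ_{i,j}·B_{i,j} ∈ 𝕋. -/
def tropPolyEval {n : ℕ} (vK : K → TT) (F : MvPolynomial (Fin n × ℕ) K)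
    (B : Fin n → ℕ → TT) : TT :=
  F.support.inf fun m =>
    vK (MvPolynomial.coeff m F) + m.support.sum fun ij => m ij • B ij.1 ij.2

/-- B lies in the tropical variety of trop_{v_K}(F): the minimum is ∞ or is
attained by at least two distinct monomials. -/
def InTropVar {n : ℕ} (vK : K → TT) (F : MvPolynomial (Fin n × ℕ) K)
    (B : Fin n → ℕ → TT) : Prop :=
  tropPolyEval vK F B = ⊤ ∨
  ∃ m₁ ∈ F.support, ∃ m₂ ∈ F.support, m₁ ≠ m₂ ∧
    (vK (MvPolynomial.coeff m₁ F) + m₁.support.sum fun ij => m₁ ij • B ij.1 ij.2)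
      = tropPolyEval vK F B ∧
    (vK (MvPolynomial.coeff m₂ F) + m₂.support.sum fun ij => m₂ ij • B ij.1 ij.2)
      = tropPolyEval vK F B

-- projections
def p1 (u : T2) : TT := u.map fun x => (ofLex x).1
def p2 (u : T2) : TT := u.map fun x => (ofLex x).2

@[simp] lemma p1_top : p1 (⊤ : T2) = ⊤ := rfl
@[simp] lemma p2_top : p2 (⊤ : T2) = ⊤ := rfl
@[simp] lemma p1_coe (x : ℝ ×ₗ ℝ) : p1 (x : T2) = ((ofLex x).1 : TT) := rfl
@[simp] lemma p2_coe (x : ℝ ×ₗ ℝ) : p2 (x : T2) = ((ofLex x).2 : TT) := rfl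
@[simp] lemma p1_zero : p1 (0 : T2) = 0 := rfl
@[simp] lemma p2_zero : p2 (0 : T2) = 0 := rfl

lemma p1_add (u v : T2) : p1 (u + v) = p1 u + p1 v := by
  induction u using WithTop.recTopCoe with
  | top => simp [p1]
  | coe x =>
    induction v using WithTop.recTopCoe with
    | top => simp [p1]
    | coe y => rfl

lemma p2_add (u v : T2) : p2 (u + v) = p2 u + p2 v := by
  induction u using WithTop.recTopCoe with
  | top => simp [p2]
  | coe x =>
    induction v using WithTop.recTopCoe with
    | top => simp [p2]
    | coe y => rfl

lemma p1_mono {u v : T2} (h : u ≤ v) : p1 u ≤ p1 v := by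
  induction v using WithTop.recTopCoe with
  | top => exact le_top
  | coe y =>
    induction u using WithTop.recTopCoe with
    | top => exact absurd (top_le_iff.mp h) (by simp)
    | coe x =>
      have h' : x ≤ y := WithTop.coe_le_coe.mp h
      rcases (Prod.Lex.le_iff).mp h' with h1 | ⟨h1, _⟩
      · exact WithTop.coe_le_coe.mpr h1.le
      · exact WithTop.coe_le_coe.mpr h1.le

lemma p2_le {u v : T2} (h : u ≤ v) (h1 : p1 u = 0) (h2 : p1 v = 0) : p2 u ≤ p2 v := by
  induction v using WithTop.recTopCoe with
  | top => exact le_top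
  | coe y =>
    induction u using WithTop.recTopCoe with
    | top => exact absurd (top_le_iff.mp h) (by simp)
    | coe x =>
      have h' : x ≤ y := WithTop.coe_le_coe.mp h
      have e1 : (ofLex x).1 = 0 := by rw [p1_coe] at h1; exact_mod_cast h1
      have e2 : (ofLex y).1 = 0 := by rw [p1_coe] at h2; exact_mod_cast h2
      rcases (Prod.Lex.le_iff).mp h' with h1' | ⟨_, h2'⟩
      · rw [e1, e2] at h1'; exact absurd h1' (lt_irrefl _)
      · exact WithTop.coe_le_coe.mpr h2'

/-- The key relation between a tropical (TT) term and a rank-2 (T2) term. -/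
def Rel (w : TT) (u : T2) : Prop :=
  0 ≤ p1 u ∧ (w ≠ ⊤ → p1 u = 0 ∧ p2 u = w) ∧ (w = ⊤ → p1 u ≠ 0)

lemma Rel_zero : Rel (0 : TT) (0 : T2) :=
  ⟨by simp, fun _ => ⟨p1_zero, p2_zero⟩, fun h => absurd h (by simp)⟩

lemma Rel_add {w₁ w₂ : TT} {u₁ u₂ : T2} (h₁ : Rel w₁ u₁) (h₂ : Rel w₂ u₂) :
    Rel (w₁ + w₂) (u₁ + u₂) := by
  obtain ⟨n₁, c₁, t₁⟩ := h₁
  obtain ⟨n₂, c₂, t₂⟩ := h₂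
  refine ⟨by rw [p1_add]; exact add_nonneg n₁ n₂, ?_, ?_⟩
  · intro hw
    have hw₁ : w₁ ≠ ⊤ := fun h => hw (by simp [h])
    have hw₂ : w₂ ≠ ⊤ := fun h => hw (by simp [h])
    obtain ⟨e₁, f₁⟩ := c₁ hw₁
    obtain ⟨e₂, f₂⟩ := c₂ hw₂
    exact ⟨by rw [p1_add, e₁, e₂, add_zero], by rw [p2_add, f₁, f₂]⟩
  · intro hw hc
    rw [p1_add] at hc
    rcases WithTop.add_eq_top.mp hw with h | h
    · exact t₁ h (le_antisymm (hc ▸ le_add_of_nonneg_right n₂) n₁)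
    · exact t₂ h (le_antisymm (hc ▸ le_add_of_nonneg_left n₁) n₂)

lemma Rel_smul {w : TT} {u : T2} (k : ℕ) (h : Rel w u) : Rel (k • w) (k • u) := by
  induction k with
  | zero => simpa [zero_nsmul] using Rel_zero
  | succ j ih =>
    rw [succ_nsmul, succ_nsmul]
    exact Rel_add ih h

lemma Rel_sum {σ : Type*} (t : Finset σ) (w : σ → TT) (u : σ → T2)
    (h : ∀ k ∈ t, Rel (w k) (u k)) :
    Rel (∑ k ∈ t, w k) (∑ k ∈ t, u k) := by
  classical
  induction t using Finset.cons_induction with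
  | empty => simpa using Rel_zero
  | cons a t ha ih =>
    rw [Finset.sum_cons, Finset.sum_cons]
    exact Rel_add (h a (Finset.mem_cons_self a t)) (ih fun k hk => h k (Finset.mem_cons_of_mem hk))

lemma Rel_phi (T : TSeries) : Rel (T 0) (Phi T) := by
  unfold Phi
  by_cases h : ∃ j, T j ≠ ⊤
  · rw [dif_pos h]
    by_cases h0 : T 0 = ⊤
    · have hne : Nat.find h ≠ 0 := fun hf => ((Nat.find_eq_zero h).mp hf) h0
      have pos : (0 : ℝ) < (Nat.find h : ℝ) := by exact_mod_cast Nat.pos_of_ne_zero hne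
      refine ⟨?_, fun hw => absurd h0 hw, fun _ => ?_⟩
      · simp only [p1_coe, ofLex_toLex]
        exact_mod_cast pos.le
      · simp only [p1_coe, ofLex_toLex]
        intro hc
        exact pos.ne' (by exact_mod_cast hc)
    · have hfind : Nat.find h = 0 := (Nat.find_eq_zero h).mpr h0
      obtain ⟨c, hc⟩ := WithTop.ne_top_iff_exists.mp h0
      refine ⟨?_, fun _ => ⟨?_, ?_⟩, fun hw => absurd hw h0⟩
      · simp [hfind]
      · simp [hfind]
      · simp [hfind, ← hc]
  · rw [dif_neg h]
    push_neg at h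
    exact ⟨le_top, fun hw => absurd (h 0) hw, fun _ => by simp⟩

-- continuation lemmas (to be placed before the theorem)
lemma IsVal.map_one' {vK : K → TT} (hv : IsVal K vK) : vK 1 = 0 := by
  have h1 : vK 1 ≠ ⊤ := fun h => one_ne_zero ((hv.eq_top_iff 1).mp h)
  have hm := hv.map_mul 1 1
  rw [one_mul] at hm
  obtain ⟨c, hc⟩ := WithTop.ne_top_iff_exists.mp h1
  rw [← hc, ← WithTop.coe_add, WithTop.coe_eq_coe] at hm
  have hc0 : c = 0 := by linarith
  rw [← hc, hc0]
  rfl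

lemma dv_iter0 {vK : K → TT} (hv : IsVal K vK) :
    ∀ (j : ℕ) (T : TSeries), ((dv vK)^[j] T) 0 = vK ((Nat.factorial j : ℕ) : K) + T j := by
  intro j
  induction j with
  | zero =>
    intro T
    simp [Nat.factorial, IsVal.map_one' hv]
  | succ k ih =>
    intro T
    rw [Function.iterate_succ_apply, ih (dv vK T)]
    show vK ((Nat.factorial k : ℕ) : K) + (vK ((k + 1 : ℕ) : K) + T (k + 1)) = _
    rw [← add_assoc, ← hv.map_mul, ← Nat.cast_mul]
    have : Nat.factorial k * (k + 1) = Nat.factorial (k + 1) := by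
      rw [Nat.factorial_succ, Nat.mul_comm]
    rw [this]

lemma valT2_eq_phi {vK : K → TT} (hv : IsVal K vK) (g : PowerSeries K) :
    valT2 vK g = Phi (tropS vK g) := by
  unfold valT2 Phi tropS
  by_cases h : ∃ j, PowerSeries.coeff j g ≠ 0
  · have h' : ∃ j, vK (PowerSeries.coeff j g) ≠ ⊤ := by
      obtain ⟨j, hj⟩ := h
      exact ⟨j, fun ht => hj ((hv.eq_top_iff _).mp ht)⟩
    have hfind : Nat.find h = Nat.find h' :=
      le_antisymm
        (Nat.find_mono fun n hn h0 => hn ((hv.eq_top_iff _).mpr h0))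
        (Nat.find_mono fun n hn ht => hn ((hv.eq_top_iff _).mp ht))
    rw [dif_pos h, dif_pos h', hfind]
  · have h' : ¬ ∃ j, vK (PowerSeries.coeff j g) ≠ ⊤ := by
      push_neg at h ⊢
      intro j
      exact (hv.eq_top_iff _).mpr (h j)
    rw [dif_neg h, dif_neg h']

/-- Per-monomial relation between the truncated tropical term and the rank-2 term. -/
lemma Rel_main {vK : K → TT} (hv : IsVal K vK) {n : ℕ}
    (S : Fin n → TSeries) (A : PowerSeries K) (m : (Fin n × ℕ) →₀ ℕ) :
    Rel (vK (PowerSeries.constantCoeff (R := K) A) +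
          m.support.sum fun ij => m ij • (S ij.1 ij.2 + vK ((Nat.factorial ij.2 : ℕ) : K)))
        (valT2 vK A + mweight vK S m) := by
  apply Rel_add
  · rw [valT2_eq_phi hv]
    have h0 : vK (PowerSeries.constantCoeff (R := K) A) = tropS vK A 0 := by
      simp [tropS]
    rw [h0]
    exact Rel_phi _
  · unfold mweight
    apply Rel_sum
    intro ij _
    apply Rel_smul
    have h0 : S ij.1 ij.2 + vK ((Nat.factorial ij.2 : ℕ) : K) = ((dv vK)^[ij.2] (S ij.1)) 0 := by
      rw [dv_iter0 hv, add_comm]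
    rw [h0]
    exact Rel_phi _


/-- Generic transfer of the two-minimizers condition along the relation `Rel`. -/
lemma transfer {α : Type*} (sF sG : Finset α) (hsub : sF ⊆ sG)
    (Ft : α → TT) (G : α → T2)
    (hrel : ∀ m, Rel (Ft m) (G m))
    (hsol : sG.inf G = ⊤ ∨ ∃ m₁ ∈ sG, ∃ m₂ ∈ sG, m₁ ≠ m₂ ∧
      G m₁ = sG.inf G ∧ G m₂ = sG.inf G)
    (hmemF : ∀ m, Ft m ≠ ⊤ → m ∈ sF) :
    sF.inf Ft = ⊤ ∨ ∃ m₁ ∈ sF, ∃ m₂ ∈ sF, m₁ ≠ m₂ ∧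
      Ft m₁ = sF.inf Ft ∧ Ft m₂ = sF.inf Ft := by
  by_cases hFtop : sF.inf Ft = ⊤
  · exact Or.inl hFtop
  obtain ⟨m₀, hm₀F, hm₀⟩ : ∃ m₀ ∈ sF, Ft m₀ ≠ ⊤ := by
    by_contra hcon
    push_neg at hcon
    exact hFtop ((Finset.inf_eq_top_iff _ _).mpr hcon)
  have h00 : p1 (G m₀) = 0 := ((hrel m₀).2.1 hm₀).1
  rcases hsol with htop | ⟨m₁, hm₁, m₂, hm₂, hne, he₁, he₂⟩
  · exact absurd ((Finset.inf_eq_top_iff _ _).mp htop m₀ (hsub hm₀F) ▸ h00) (by simp)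
  · have hle : G m₁ ≤ G m₀ := by rw [he₁]; exact Finset.inf_le (hsub hm₀F)
    have hp1 : p1 (G m₁) = 0 := le_antisymm (by rw [← h00]; exact p1_mono hle) (hrel m₁).1
    have h21 : G m₂ = G m₁ := by rw [he₂, he₁]
    have hp1' : p1 (G m₂) = 0 := by rw [h21, hp1]
    have hFt1 : Ft m₁ ≠ ⊤ := fun h => (hrel m₁).2.2 h hp1
    have hFt2 : Ft m₂ ≠ ⊤ := fun h => (hrel m₂).2.2 h hp1'
    have hq1 : p2 (G m₁) = Ft m₁ := ((hrel m₁).2.1 hFt1).2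
    have hq2 : p2 (G m₂) = Ft m₂ := ((hrel m₂).2.1 hFt2).2
    have hFeq : Ft m₂ = Ft m₁ := by rw [← hq1, ← hq2, h21]
    have hminle : ∀ m' ∈ sF, Ft m₁ ≤ Ft m' := by
      intro m' hm'
      by_cases h' : Ft m' = ⊤
      · rw [h']; exact le_top
      · have hgle : G m₁ ≤ G m' := by rw [he₁]; exact Finset.inf_le (hsub hm')
        have hp := p2_le hgle hp1 ((hrel m').2.1 h').1
        rw [hq1, ((hrel m').2.1 h').2] at hp
        exact hp
    have hinf : sF.inf Ft = Ft m₁ :=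
      le_antisymm (Finset.inf_le (hmemF m₁ hFt1)) (Finset.le_inf hminle)
    exact Or.inr ⟨m₁, hmemF m₁ hFt1, m₂, hmemF m₂ hFt2, hne, hinf.symm, by rw [hFeq, hinf]⟩

/-- **Truncation lemma**: for every tropical solution S of trop_v(I), the
truncated point B_m = (c_{i,j} + v_K(j!))_{i,j} lies in the tropical variety of
the polynomials trop_{v_K}(F_{l,r}), 0 ≤ r ≤ m. -/
theorem truncation_lemma
    {K : Type} [Field K] [IsAlgClosed K] [CharZero K]
    (vK : K → TT) (hv : IsVal K vK)
    {n : ℕ} (I : Ideal (DP K n)) (hdiff : ∀ f ∈ I, dDP f ∈ I)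
    {s : ℕ} (fs : Fin s → DP K n) (hmem : ∀ l, fs l ∈ I)
    (hsol : ∀ a : Fin n → PowerSeries K,
      (∀ f ∈ I, evalSol f a = 0) ↔ (∀ l, evalSol (fs l) a = 0))
    (S : Fin n → TSeries) (hS : ∀ f ∈ I, IsTropSol vK f S)
    (m : ℕ) :
    ∀ (l : Fin s), ∀ r ≤ m, InTropVar vK (Flr fs l r)
      (fun i j => S i j + vK ((Nat.factorial j : ℕ) : K)) := by
  intro l r hr
  have hgI : ∀ k : ℕ, dDP^[k] (fs l) ∈ I := by
    intro k
    induction k with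
    | zero => simpa using hmem l
    | succ j ih => rw [Function.iterate_succ_apply']; exact hdiff _ ih
  have hts : IsTropSol vK (dDP^[r] (fs l)) S := hS _ (hgI r)
  have hc : ∀ m : (Fin n × ℕ) →₀ ℕ,
      MvPolynomial.coeff m (Flr fs l r)
        = PowerSeries.constantCoeff (R := K) (MvPolynomial.coeff m (dDP^[r] (fs l))) := by
    intro m
    simp only [Flr, MvPolynomial.coeff_map]
  have hsub : (Flr fs l r).support ⊆ (dDP^[r] (fs l)).support := by
    intro m hm
    rw [MvPolynomial.mem_support_iff] at hm ⊢
    intro h0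
    exact hm (by rw [hc m, h0, map_zero])
  have hrel : ∀ m : (Fin n × ℕ) →₀ ℕ,
      Rel (vK (MvPolynomial.coeff m (Flr fs l r)) +
            m.support.sum fun ij => m ij • (S ij.1 ij.2 + vK ((Nat.factorial ij.2 : ℕ) : K)))
          (valT2 vK (MvPolynomial.coeff m (dDP^[r] (fs l))) + mweight vK S m) := by
    intro m
    rw [hc m]
    exact Rel_main hv S _ m
  have hmemF : ∀ m : (Fin n × ℕ) →₀ ℕ,
      (vK (MvPolynomial.coeff m (Flr fs l r)) +
        m.support.sum fun ij => m ij • (S ij.1 ij.2 + vK ((Nat.factorial ij.2 : ℕ) : K))) ≠ ⊤ →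
      m ∈ (Flr fs l r).support := by
    intro m hm
    rw [MvPolynomial.mem_support_iff]
    intro h0
    exact hm (WithTop.add_eq_top.mpr (Or.inl ((hv.eq_top_iff _).mpr h0)))
  exact transfer (Flr fs l r).support (dDP^[r] (fs l)).support hsub
    (fun m => vK (MvPolynomial.coeff m (Flr fs l r)) +
      m.support.sum fun ij => m ij • (S ij.1 ij.2 + vK ((Nat.factorial ij.2 : ℕ) : K)))
    (fun m => valT2 vK (MvPolynomial.coeff m (dDP^[r] (fs l))) + mweight vK S m)
    hrel hts hmemF


end TropDiff
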